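/- As Im λ → +∞ (uniformly in Re λ), ∂ₓf₁⁺(0,λ)/(iλ) → 1 and ∂ₓf₂⁺(0,λ)/(−iλβ) → 1; that is, for every ε > 0 there exists T > 0 such that Im λ > T implies |∂ₓf₁⁺(0,λ)/(iλ) − 1| < ε and |∂ₓf₂⁺(0,λ)/(−iλβ) − 1| < ε. -/

import Mathlib

open Complex MeasureTheory Filter Topology

noncomputable def qfun (q : ℕ → ℂ) (x : ℝ) : ℂ :=
  ∑' n : ℕ, q (n + 1) * Complex.exp (Complex.I * ((n : ℂ) + 1) * (x : ℂ))

noncomputable def f1 (V : ℕ → ℕ → ℂ) (lam : ℂ) (x : ℂ) : ℂ :=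
  Complex.exp (Complex.I * lam * x) *
    (1 + ∑' n : ℕ, (((n : ℂ) + 1) + 2 * lam)⁻¹ *
      ∑' k : ℕ, V (n + 1) (n + 1 + k) *
        Complex.exp (Complex.I * ((n : ℂ) + 1 + (k : ℂ)) * x))

noncomputable def f2 (V : ℕ → ℕ → ℂ) (β : ℝ) (lam : ℂ) (x : ℂ) : ℂ :=
  Complex.exp (-Complex.I * lam * (β : ℂ) * x) *
    (1 + ∑' n : ℕ, (((n : ℂ) + 1) - 2 * lam * (β : ℂ))⁻¹ *
      ∑' k : ℕ, V (n + 1) (n + 1 + k) *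
        Complex.exp (Complex.I * ((n : ℂ) + 1 + (k : ℂ)) * x))

noncomputable def C12 (V : ℕ → ℕ → ℂ) (β : ℝ) (lam : ℂ) : ℂ :=
  (f1 V lam 0 * deriv (fun t : ℝ => f2 V β lam (t : ℂ)) 0
    - deriv (fun t : ℝ => f1 V lam (t : ℂ)) 0 * f2 V β lam 0) / (2 * Complex.I * lam)

noncomputable def rho (β : ℝ) (x : ℝ) : ℝ := if 0 ≤ x then 1 else β ^ 2

/-- The recurrence relations (6)–(7) linking the coefficients `V` to the Fourier
coefficients `q` of the potential. -/
def Recur (q : ℕ → ℂ) (V : ℕ → ℕ → ℂ) : Prop :=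
  (∀ n α : ℕ, 1 ≤ n → n < α →
      (α : ℂ) * ((α : ℂ) - (n : ℂ)) * V n α
        + ∑ s ∈ Finset.Icc n (α - 1), q (α - s) * V n s = 0) ∧
  (∀ α : ℕ, 1 ≤ α → (α : ℂ) * ∑ n ∈ Finset.Icc 1 α, V n α + q α = 0)

/-- Convergence of the series `∑_{n≥1} (1/n) ∑_{α≥n} α |V_{nα}|` (inner sums indexed
by `α = n + k`). -/
def Conv (V : ℕ → ℕ → ℂ) : Prop :=
  (∀ n : ℕ, 1 ≤ n → Summable fun k : ℕ => ((n + k : ℕ) : ℝ) * ‖V n (n + k)‖) ∧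
  Summable (fun n : ℕ =>
    ((n : ℝ) + 1)⁻¹ * ∑' k : ℕ, ((n + 1 + k : ℕ) : ℝ) * ‖V (n + 1) (n + 1 + k)‖)


namespace Stmt12Aux

noncomputable def Afun (V : ℕ → ℕ → ℂ) (n : ℕ) : ℝ :=
  ∑' k : ℕ, ((n + 1 + k : ℕ) : ℝ) * ‖V (n + 1) (n + 1 + k)‖

noncomputable def gfun (V : ℕ → ℕ → ℂ) (n : ℕ) (t : ℝ) : ℂ :=
  ∑' k : ℕ, V (n + 1) (n + 1 + k) * Complex.exp (Complex.I * ((n : ℂ) + 1 + (k : ℂ)) * (t : ℂ))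

noncomputable def gfun' (V : ℕ → ℕ → ℂ) (n : ℕ) (t : ℝ) : ℂ :=
  ∑' k : ℕ, V (n + 1) (n + 1 + k) * (Complex.I * ((n : ℂ) + 1 + (k : ℂ))) *
    Complex.exp (Complex.I * ((n : ℂ) + 1 + (k : ℂ)) * (t : ℂ))

lemma Afun_nonneg (V : ℕ → ℕ → ℂ) (n : ℕ) : 0 ≤ Afun V n :=
  tsum_nonneg fun k => mul_nonneg (Nat.cast_nonneg _) (norm_nonneg _)

lemma norm_exp_term (n k : ℕ) (t : ℝ) :
    ‖Complex.exp (Complex.I * ((n : ℂ) + 1 + (k : ℂ)) * (t : ℂ))‖ = 1 := by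
  have h : Complex.I * ((n : ℂ) + 1 + (k : ℂ)) * (t : ℂ)
      = ((((n : ℝ) + 1 + (k : ℝ)) * t : ℝ) : ℂ) * Complex.I := by push_cast; ring
  rw [h, Complex.norm_exp_ofReal_mul_I]

lemma norm_coeff (n k : ℕ) : ‖Complex.I * ((n : ℂ) + 1 + (k : ℂ))‖ = ((n + 1 + k : ℕ) : ℝ) := by
  have h : (n : ℂ) + 1 + (k : ℂ) = ((n + 1 + k : ℕ) : ℂ) := by push_cast; ring
  rw [norm_mul, Complex.norm_I, one_mul, h, Complex.norm_natCast]

lemma term_hasDeriv (c w : ℂ) (t : ℝ) :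
    HasDerivAt (fun s : ℝ => c * Complex.exp (Complex.I * w * (s : ℂ)))
      (c * (Complex.I * w) * Complex.exp (Complex.I * w * (t : ℂ))) t := by
  have h0 : HasDerivAt (fun z : ℂ => Complex.I * w * z) (Complex.I * w) (t : ℂ) := by
    simpa using (hasDerivAt_id ((t : ℝ) : ℂ)).const_mul (Complex.I * w)
  have h1 := (h0.cexp.comp_ofReal).const_mul c
  exact h1.congr_deriv (by ring)

section
variable (V : ℕ → ℕ → ℂ) (n : ℕ)

lemma summable_normV (hA : Summable fun k : ℕ => ((n + 1 + k : ℕ) : ℝ) * ‖V (n + 1) (n + 1 + k)‖) :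
    Summable fun k : ℕ => ‖V (n + 1) (n + 1 + k)‖ :=
  Summable.of_nonneg_of_le (fun k => norm_nonneg _)
    (fun k => le_mul_of_one_le_left (norm_nonneg _) (by exact_mod_cast Nat.one_le_iff_ne_zero.2 (by omega))) hA

lemma summable_gterm (hA : Summable fun k : ℕ => ((n + 1 + k : ℕ) : ℝ) * ‖V (n + 1) (n + 1 + k)‖) (t : ℝ) :
    Summable fun k : ℕ => V (n + 1) (n + 1 + k) *
      Complex.exp (Complex.I * ((n : ℂ) + 1 + (k : ℂ)) * (t : ℂ)) := by
  apply Summable.of_norm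
  have : ∀ k : ℕ, ‖V (n + 1) (n + 1 + k) *
      Complex.exp (Complex.I * ((n : ℂ) + 1 + (k : ℂ)) * (t : ℂ))‖ = ‖V (n + 1) (n + 1 + k)‖ := by
    intro k; rw [norm_mul, norm_exp_term, mul_one]
  simpa only [this] using summable_normV V n hA

lemma gfun_hasDerivAt (hA : Summable fun k : ℕ => ((n + 1 + k : ℕ) : ℝ) * ‖V (n + 1) (n + 1 + k)‖) (t : ℝ) : HasDerivAt (gfun V n) (gfun' V n t) t := by
  unfold gfun gfun'
  exact hasDerivAt_tsum (u := fun k : ℕ => ((n + 1 + k : ℕ) : ℝ) * ‖V (n + 1) (n + 1 + k)‖)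
    (g := fun (k : ℕ) (s : ℝ) => V (n + 1) (n + 1 + k) *
      Complex.exp (Complex.I * ((n : ℂ) + 1 + (k : ℂ)) * (s : ℂ)))
    (g' := fun (k : ℕ) (s : ℝ) => V (n + 1) (n + 1 + k) * (Complex.I * ((n : ℂ) + 1 + (k : ℂ))) *
      Complex.exp (Complex.I * ((n : ℂ) + 1 + (k : ℂ)) * (s : ℂ)))
    hA
    (fun k s => term_hasDeriv (V (n + 1) (n + 1 + k)) ((n : ℂ) + 1 + (k : ℂ)) s)
    (fun k s => by
      rw [norm_mul, norm_exp_term, mul_one, norm_mul, norm_coeff]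
      exact le_of_eq (mul_comm _ _))
    (summable_gterm V n hA 0) t

lemma norm_gfun'_le (hA : Summable fun k : ℕ => ((n + 1 + k : ℕ) : ℝ) * ‖V (n + 1) (n + 1 + k)‖) (t : ℝ) : ‖gfun' V n t‖ ≤ Afun V n := by
  have heq : ∀ k : ℕ, ‖V (n + 1) (n + 1 + k) * (Complex.I * ((n : ℂ) + 1 + (k : ℂ))) *
      Complex.exp (Complex.I * ((n : ℂ) + 1 + (k : ℂ)) * (t : ℂ))‖
      = ((n + 1 + k : ℕ) : ℝ) * ‖V (n + 1) (n + 1 + k)‖ := by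
    intro k
    rw [norm_mul, norm_exp_term, mul_one, norm_mul, norm_coeff, mul_comm]
  calc ‖gfun' V n t‖ ≤ ∑' k : ℕ, ‖V (n + 1) (n + 1 + k) * (Complex.I * ((n : ℂ) + 1 + (k : ℂ))) *
        Complex.exp (Complex.I * ((n : ℂ) + 1 + (k : ℂ)) * (t : ℂ))‖ := by
        apply norm_tsum_le_tsum_norm
        simpa only [heq] using hA
    _ = Afun V n := by rw [Afun]; exact tsum_congr heq

lemma norm_gfun_le (hA : Summable fun k : ℕ => ((n + 1 + k : ℕ) : ℝ) * ‖V (n + 1) (n + 1 + k)‖) (t : ℝ) : ‖gfun V n t‖ ≤ ((n : ℝ) + 1)⁻¹ * Afun V n := by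
  have heq : ∀ k : ℕ, ‖V (n + 1) (n + 1 + k) *
      Complex.exp (Complex.I * ((n : ℂ) + 1 + (k : ℂ)) * (t : ℂ))‖ = ‖V (n + 1) (n + 1 + k)‖ := by
    intro k; rw [norm_mul, norm_exp_term, mul_one]
  have hpos : (0 : ℝ) < (n : ℝ) + 1 := by positivity
  calc ‖gfun V n t‖ ≤ ∑' k : ℕ, ‖V (n + 1) (n + 1 + k) *
        Complex.exp (Complex.I * ((n : ℂ) + 1 + (k : ℂ)) * (t : ℂ))‖ := by
        apply norm_tsum_le_tsum_norm
        simpa only [heq] using summable_normV V n hA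
    _ = ∑' k : ℕ, ‖V (n + 1) (n + 1 + k)‖ := tsum_congr heq
    _ ≤ ∑' k : ℕ, ((n : ℝ) + 1)⁻¹ * (((n + 1 + k : ℕ) : ℝ) * ‖V (n + 1) (n + 1 + k)‖) := by
        apply Summable.tsum_le_tsum _ (summable_normV V n hA) (hA.mul_left _)
        intro k
        rw [← mul_assoc]
        calc ‖V (n + 1) (n + 1 + k)‖ = (((n : ℝ) + 1)⁻¹ * ((n : ℝ) + 1)) * ‖V (n + 1) (n + 1 + k)‖ := by
              rw [inv_mul_cancel₀ hpos.ne', one_mul]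
          _ ≤ (((n : ℝ) + 1)⁻¹ * ((n + 1 + k : ℕ) : ℝ)) * ‖V (n + 1) (n + 1 + k)‖ := by
              apply mul_le_mul_of_nonneg_right _ (norm_nonneg _)
              apply mul_le_mul_of_nonneg_left _ (by positivity)
              push_cast; linarith
    _ = ((n : ℝ) + 1)⁻¹ * Afun V n := tsum_mul_left
end


lemma coeff_bound (n : ℕ) (v : ℂ) (hv : v.im ≠ 0) :
    ‖(((n : ℂ) + 1) + v)⁻¹‖ ≤ |v.im|⁻¹ ∧
    ((n : ℝ) + 1) * ‖(((n : ℂ) + 1) + v)⁻¹‖ ≤ max 2 (2 * ‖v‖ / |v.im|) := by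
  have hvpos : 0 < |v.im| := abs_pos.2 hv
  have him : (((n : ℂ) + 1) + v).im = v.im := by simp
  have habs : |v.im| ≤ ‖((n : ℂ) + 1) + v‖ := by
    rw [← him]
    exact Complex.abs_im_le_norm _
  have hzpos : 0 < ‖((n : ℂ) + 1) + v‖ := lt_of_lt_of_le hvpos habs
  have hninv : ‖(((n : ℂ) + 1) + v)⁻¹‖ = ‖((n : ℂ) + 1) + v‖⁻¹ := norm_inv _
  have hnpos : (0 : ℝ) < (n : ℝ) + 1 := by positivity
  constructor
  · rw [hninv]
    exact inv_anti₀ hvpos habs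
  · rcases le_or_gt ((n : ℝ) + 1) (2 * ‖v‖) with h | h
    · refine le_trans ?_ (le_max_right _ _)
      rw [hninv, div_eq_mul_inv]
      exact mul_le_mul h (inv_anti₀ hvpos habs) (by positivity) (by positivity)
    · refine le_trans ?_ (le_max_left _ _)
      have hn1 : ‖((n : ℂ) + 1)‖ = (n : ℝ) + 1 := by
        rw [show ((n : ℂ) + 1) = ((n + 1 : ℕ) : ℂ) by push_cast; ring, Complex.norm_natCast]
        push_cast; ring
      have htri : ‖((n : ℂ) + 1)‖ ≤ ‖((n : ℂ) + 1) + v‖ + ‖v‖ := by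
        calc ‖((n : ℂ) + 1)‖ = ‖(((n : ℂ) + 1) + v) - v‖ := by ring_nf
          _ ≤ ‖((n : ℂ) + 1) + v‖ + ‖v‖ := norm_sub_le _ _
      have hge : ((n : ℝ) + 1) / 2 ≤ ‖((n : ℂ) + 1) + v‖ := by
        rw [hn1] at htri; linarith
      rw [hninv]
      calc ((n : ℝ) + 1) * ‖((n : ℂ) + 1) + v‖⁻¹
          ≤ ((n : ℝ) + 1) * (((n : ℝ) + 1) / 2)⁻¹ := by
            apply mul_le_mul_of_nonneg_left _ (by positivity)
            exact inv_anti₀ (by positivity) hge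
        _ = 2 := by field_simp

lemma master (V : ℕ → ℕ → ℂ) (hC : Conv V) (u : ℂ) (c : ℕ → ℂ) (M δ : ℝ)
    (hu : u ≠ 0) (hc1 : ∀ n : ℕ, ‖c n‖ ≤ δ) (hc2 : ∀ n : ℕ, ((n : ℝ) + 1) * ‖c n‖ ≤ M) :
    ‖deriv (fun t : ℝ => Complex.exp (u * (t : ℂ)) * (1 + ∑' n : ℕ, c n * gfun V n t)) 0 / u - 1‖
      ≤ (∑' n : ℕ, ((n : ℝ) + 1)⁻¹ * Afun V n) * δ
        + (∑' n : ℕ, ((n : ℝ) + 1)⁻¹ * Afun V n) * (M / ‖u‖) := by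
  have hA : ∀ n : ℕ, Summable fun k : ℕ => ((n + 1 + k : ℕ) : ℝ) * ‖V (n + 1) (n + 1 + k)‖ :=
    fun n => hC.1 (n + 1) (Nat.le_add_left 1 n)
  have hB : Summable (fun n : ℕ => ((n : ℝ) + 1)⁻¹ * Afun V n) := hC.2
  set B := ∑' n : ℕ, ((n : ℝ) + 1)⁻¹ * Afun V n with hBdef
  have hM0 : 0 ≤ M := le_trans (by positivity) (hc2 0)
  have hδ0 : 0 ≤ δ := le_trans (norm_nonneg _) (hc1 0)
  have hcM : ∀ n : ℕ, ‖c n‖ ≤ M * ((n : ℝ) + 1)⁻¹ := by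
    intro n
    have hpos : (0 : ℝ) < (n : ℝ) + 1 := by positivity
    rw [show M * ((n : ℝ) + 1)⁻¹ = M / ((n : ℝ) + 1) from (div_eq_mul_inv M _).symm,
      le_div_iff₀ hpos]
    linarith [hc2 n]
  have hterm' : ∀ (n : ℕ) (t : ℝ), ‖c n * gfun' V n t‖ ≤ M * (((n : ℝ) + 1)⁻¹ * Afun V n) := by
    intro n t
    rw [norm_mul]
    calc ‖c n‖ * ‖gfun' V n t‖ ≤ (M * ((n : ℝ) + 1)⁻¹) * Afun V n :=
          mul_le_mul (hcM n) (norm_gfun'_le V n (hA n) t) (norm_nonneg _) (by positivity)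
      _ = M * (((n : ℝ) + 1)⁻¹ * Afun V n) := by ring
  have hterm0 : ∀ (n : ℕ) (t : ℝ), ‖c n * gfun V n t‖ ≤ δ * (((n : ℝ) + 1)⁻¹ * Afun V n) := by
    intro n t
    rw [norm_mul]
    exact mul_le_mul (hc1 n) (norm_gfun_le V n (hA n) t) (norm_nonneg _) hδ0
  have hS0norm : Summable (fun n : ℕ => ‖c n * gfun V n 0‖) :=
    Summable.of_nonneg_of_le (fun n => norm_nonneg _) (fun n => hterm0 n 0) (hB.mul_left δ)
  have hS1norm : Summable (fun n : ℕ => ‖c n * gfun' V n 0‖) :=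
    Summable.of_nonneg_of_le (fun n => norm_nonneg _) (fun n => hterm' n 0) (hB.mul_left M)
  have hSder : HasDerivAt (fun t : ℝ => ∑' n : ℕ, c n * gfun V n t)
      (∑' n : ℕ, c n * gfun' V n 0) 0 :=
    hasDerivAt_tsum (u := fun n : ℕ => M * (((n : ℝ) + 1)⁻¹ * Afun V n)) (hB.mul_left M)
      (fun n t => (gfun_hasDerivAt V n (hA n) t).const_mul (c n))
      (fun n t => hterm' n t) hS0norm.of_norm 0
  have hexp : HasDerivAt (fun t : ℝ => Complex.exp (u * (t : ℂ))) u 0 := by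
    have h0 : HasDerivAt (fun z : ℂ => u * z) u (((0 : ℝ) : ℂ)) := by
      simpa using (hasDerivAt_id (((0 : ℝ) : ℂ))).const_mul u
    simpa using (h0.cexp).comp_ofReal
  have hprod : HasDerivAt
      (fun t : ℝ => Complex.exp (u * (t : ℂ)) * (1 + ∑' n : ℕ, c n * gfun V n t))
      (u * (1 + ∑' n : ℕ, c n * gfun V n 0) + (∑' n : ℕ, c n * gfun' V n 0)) 0 := by
    exact (hexp.mul (hSder.const_add 1)).congr_deriv (by simp)
  rw [hprod.deriv]
  set S0 := ∑' n : ℕ, c n * gfun V n 0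
  set S1 := ∑' n : ℕ, c n * gfun' V n 0
  have hupos : (0 : ℝ) < ‖u‖ := norm_pos_iff.2 hu
  have hrw : (u * (1 + S0) + S1) / u - 1 = S0 + S1 / u := by
    field_simp
    ring
  rw [hrw]
  have h1 : ‖S0‖ ≤ B * δ := by
    calc ‖S0‖ ≤ ∑' n : ℕ, ‖c n * gfun V n 0‖ := norm_tsum_le_tsum_norm hS0norm
      _ ≤ ∑' n : ℕ, δ * (((n : ℝ) + 1)⁻¹ * Afun V n) :=
          Summable.tsum_le_tsum (fun n => hterm0 n 0) hS0norm (hB.mul_left δ)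
      _ = δ * B := tsum_mul_left
      _ = B * δ := mul_comm _ _
  have h2 : ‖S1‖ ≤ B * M := by
    calc ‖S1‖ ≤ ∑' n : ℕ, ‖c n * gfun' V n 0‖ := norm_tsum_le_tsum_norm hS1norm
      _ ≤ ∑' n : ℕ, M * (((n : ℝ) + 1)⁻¹ * Afun V n) :=
          Summable.tsum_le_tsum (fun n => hterm' n 0) hS1norm (hB.mul_left M)
      _ = M * B := tsum_mul_left
      _ = B * M := mul_comm _ _
  calc ‖S0 + S1 / u‖ ≤ ‖S0‖ + ‖S1 / u‖ := norm_add_le _ _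
    _ = ‖S0‖ + ‖S1‖ / ‖u‖ := by rw [norm_div]
    _ ≤ B * δ + (B * M) / ‖u‖ := by gcongr
    _ = B * δ + B * (M / ‖u‖) := by ring

end Stmt12Aux

open Stmt12Aux in
theorem stmt12 (q : ℕ → ℂ) (V : ℕ → ℕ → ℂ)
    (hq : Summable fun n : ℕ => ‖q (n + 1)‖ ^ 2)
    (hR : Recur q V) (hC : Conv V)
    (β : ℝ) (hβ : 0 < β) (hβ1 : β ≠ 1) :
    ∀ ε : ℝ, 0 < ε → ∃ T : ℝ, 0 < T ∧ ∀ lam : ℂ, T < lam.im →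
      ‖deriv (fun t : ℝ => f1 V lam (t : ℂ)) 0 / (Complex.I * lam) - 1‖ < ε ∧
      ‖deriv (fun t : ℝ => f2 V β lam (t : ℂ)) 0 / (-Complex.I * lam * (β : ℂ)) - 1‖ < ε := by
  intro ε hε
  set B := ∑' n : ℕ, ((n : ℝ) + 1)⁻¹ * Afun V n with hBdef
  have hB0 : 0 ≤ B := tsum_nonneg fun n => mul_nonneg (by positivity) (Afun_nonneg V n)
  have hβinv : 0 < β⁻¹ := by positivity
  refine ⟨(3 * B * (1 + β⁻¹) + 1) / ε, by positivity, ?_⟩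
  intro lam hlam
  have hT : (0 : ℝ) < (3 * B * (1 + β⁻¹) + 1) / ε := by positivity
  have him : 0 < lam.im := lt_trans hT hlam
  have hnorm : lam.im ≤ ‖lam‖ := by
    exact le_trans (le_abs_self _) (Complex.abs_im_le_norm lam)
  have hlam0 : lam ≠ 0 := fun h => by simp [h] at him
  have hnormpos : 0 < ‖lam‖ := lt_of_lt_of_le him hnorm
  have hkey : 3 * B * (1 + β⁻¹) + 1 < ε * lam.im := by
    have := (div_lt_iff₀ hε).1 hlam
    linarith
  have h3B : 3 * B < ε * lam.im := by nlinarith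
  have h3Bβ : 3 * B < ε * (β * lam.im) := by
    have h1 : 3 * B * β⁻¹ < ε * lam.im := by nlinarith
    calc 3 * B = (3 * B * β⁻¹) * β := by field_simp
      _ < (ε * lam.im) * β := by
          exact mul_lt_mul_of_pos_right h1 hβ
      _ = ε * (β * lam.im) := by ring
  constructor
  · -- f1
    have hu : Complex.I * lam ≠ 0 := mul_ne_zero Complex.I_ne_zero hlam0
    have h2im : ((2 : ℂ) * lam).im = 2 * lam.im := by simp
    have h2imne : ((2 : ℂ) * lam).im ≠ 0 := by rw [h2im]; positivity
    have h2abs : |((2 : ℂ) * lam).im| = 2 * lam.im := by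
      rw [h2im]; exact abs_of_pos (by positivity)
    have h2norm : ‖(2 : ℂ) * lam‖ = 2 * ‖lam‖ := by
      rw [norm_mul]; norm_num
    have hMval : max 2 (2 * ‖(2 : ℂ) * lam‖ / |((2 : ℂ) * lam).im|) = 2 * ‖lam‖ / lam.im := by
      rw [h2abs, h2norm]
      have hx : 2 * (2 * ‖lam‖) / (2 * lam.im) = 2 * ‖lam‖ / lam.im :=
        mul_div_mul_left _ _ two_ne_zero
      rw [hx, max_eq_right]
      rw [le_div_iff₀ him]; linarith
    have key := master V hC (Complex.I * lam) (fun n => (((n : ℂ) + 1) + 2 * lam)⁻¹)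
        (2 * ‖lam‖ / lam.im) ((2 * lam.im)⁻¹) hu
        (fun n => by
          have h := (coeff_bound n (2 * lam) h2imne).1
          rwa [h2abs] at h)
        (fun n => by
          have h := (coeff_bound n (2 * lam) h2imne).2
          rwa [hMval] at h)
    have hfun : (fun t : ℝ => f1 V lam (t : ℂ)) = (fun t : ℝ =>
        Complex.exp (Complex.I * lam * (t : ℂ)) *
          (1 + ∑' n : ℕ, (((n : ℂ) + 1) + 2 * lam)⁻¹ * gfun V n t)) := rfl
    rw [hfun]
    refine lt_of_le_of_lt key ?_
    have hIlam : ‖Complex.I * lam‖ = ‖lam‖ := by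
      rw [norm_mul, Complex.norm_I, one_mul]
    rw [hIlam]
    have e2 : (2 * ‖lam‖ / lam.im) / ‖lam‖ = 2 / lam.im := by
      rw [div_div, div_eq_div_iff (by positivity) him.ne']
      ring
    rw [e2]
    have e3 : B * (2 * lam.im)⁻¹ + B * (2 / lam.im) = (B / 2 + 2 * B) / lam.im := by
      rw [eq_div_iff him.ne', mul_inv]
      field_simp
    rw [e3, div_lt_iff₀ him]
    nlinarith
  · -- f2
    have hβC : ((β : ℝ) : ℂ) ≠ 0 := Complex.ofReal_ne_zero.2 hβ.ne'
    have hu : -Complex.I * lam * (β : ℂ) ≠ 0 :=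
      mul_ne_zero (mul_ne_zero (neg_ne_zero.2 Complex.I_ne_zero) hlam0) hβC
    have hvim : (-(2 * lam * ((β : ℝ) : ℂ))).im = -(2 * lam.im * β) := by
      simp [Complex.mul_im]
    have hvimne : (-(2 * lam * ((β : ℝ) : ℂ))).im ≠ 0 := by
      rw [hvim]; intro h; nlinarith [neg_eq_zero.1 h]
    have hvabs : |(-(2 * lam * ((β : ℝ) : ℂ))).im| = 2 * β * lam.im := by
      rw [hvim, abs_neg, abs_of_pos (by positivity)]; ring
    have hvnorm : ‖-(2 * lam * ((β : ℝ) : ℂ))‖ = 2 * ‖lam‖ * β := by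
      rw [norm_neg, norm_mul, norm_mul, Complex.norm_real, Real.norm_eq_abs,
        abs_of_pos hβ]
      norm_num
    have hMval : max 2 (2 * ‖-(2 * lam * ((β : ℝ) : ℂ))‖ / |(-(2 * lam * ((β : ℝ) : ℂ))).im|)
        = 2 * ‖lam‖ / lam.im := by
      rw [hvabs, hvnorm]
      have habs0 : ‖lam‖ ≠ 0 := hnormpos.ne'
      have hx : 2 * (2 * ‖lam‖ * β) / (2 * β * lam.im) = 2 * ‖lam‖ / lam.im := by
        rw [div_eq_div_iff (by positivity) him.ne']
        ring
      rw [hx, max_eq_right]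
      rw [le_div_iff₀ him]; linarith
    have hsub : ∀ n : ℕ, (((n : ℂ) + 1) - 2 * lam * ((β : ℝ) : ℂ))
        = ((n : ℂ) + 1) + -(2 * lam * ((β : ℝ) : ℂ)) := fun n => sub_eq_add_neg _ _
    have key := master V hC (-Complex.I * lam * (β : ℂ))
        (fun n => (((n : ℂ) + 1) - 2 * lam * (β : ℂ))⁻¹)
        (2 * ‖lam‖ / lam.im) ((2 * β * lam.im)⁻¹) hu
        (fun n => by
          have h := (coeff_bound n (-(2 * lam * ((β : ℝ) : ℂ))) hvimne).1
          rw [hvabs, ← hsub n] at h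
          exact h
          )
        (fun n => by
          have h := (coeff_bound n (-(2 * lam * ((β : ℝ) : ℂ))) hvimne).2
          rw [hMval, ← hsub n] at h
          exact h
          )
    have hfun : (fun t : ℝ => f2 V β lam (t : ℂ)) = (fun t : ℝ =>
        Complex.exp (-Complex.I * lam * (β : ℂ) * (t : ℂ)) *
          (1 + ∑' n : ℕ, (((n : ℂ) + 1) - 2 * lam * (β : ℂ))⁻¹ * gfun V n t)) := rfl
    rw [hfun]
    refine lt_of_le_of_lt key ?_
    have hIlam : ‖-Complex.I * lam * ((β : ℝ) : ℂ)‖ = ‖lam‖ * β := by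
      rw [norm_mul, norm_mul, norm_neg, Complex.norm_I, one_mul, Complex.norm_real,
        Real.norm_eq_abs, abs_of_pos hβ]
    rw [hIlam]
    have e2 : (2 * ‖lam‖ / lam.im) / (‖lam‖ * β) = 2 / (β * lam.im) := by
      rw [div_div, div_eq_div_iff (by positivity) (by positivity)]
      ring
    rw [e2]
    have e3 : B * (2 * β * lam.im)⁻¹ + B * (2 / (β * lam.im))
        = (B / 2 + 2 * B) / (β * lam.im) := by
      rw [eq_div_iff (by positivity)]
      field_simp
    rw [e3, div_lt_iff₀ (by positivity)]
    have : ε * (β * lam.im) > 3 * B := h3Bβ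
    nlinarith
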